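/- Let G be a directed graph on N vertices with adjacency matrix A. The number of Hamiltonian cycles starting at any fixed vertex (equivalently, rooted Hamiltonian cycles counted once per cycle) equals (1/N) ∑_{D ∈ 𝒟} (−1)^{N−|D|} Tr((A_D)^N), where 𝒟 is the set of weakly connected dominating subsets of V. -/

import Mathlib

open scoped Classical

/-- Restriction of a matrix to a subset of indices (zero outside `S × S`). -/
def restrict {N : ℕ} {R : Type} [Zero R] (M : Matrix (Fin N) (Fin N) R) (S : Finset (Fin N)) :
    Matrix (Fin N) (Fin N) R :=
  fun i j => if i ∈ S ∧ j ∈ S then M i j else 0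

/-- The subgraph induced by `C` is weakly connected. -/
def WConn {N : ℕ} (E : Fin N → Fin N → Prop) (C : Finset (Fin N)) : Prop :=
  ∀ i ∈ C, ∀ j ∈ C,
    Relation.ReflTransGen (fun a b => a ∈ C ∧ b ∈ C ∧ (E a b ∨ E b a)) i j

/-- The weak neighborhood of `C`: vertices outside `C` with an edge to or from `C`. -/
noncomputable def wNbhd {N : ℕ} (E : Fin N → Fin N → Prop) (C : Finset (Fin N)) :
    Finset (Fin N) :=
  Finset.univ.filter (fun i => i ∉ C ∧ ∃ j ∈ C, E i j ∨ E j i)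

/-!
`Tr((A_D)^N)` counts the closed walks of length `N` inside `D`. Exchanging the sums, a closed walk
with vertex set `C` contributes `∑ (-1)^(N-|D|)` over the connected dominating `D ⊇ C`. Over all
`D ⊇ C` this alternating sum is `[C = V]`, and the supersets that are not connected dominating
cancel in pairs: toggle the least vertex that is neither in nor next to the weak component `K` of
`D` containing `C`; this leaves `K`, hence the toggled vertex, unchanged. So exactly the closed walks
through every vertex survive, and these are the `N` rotations of the Hamiltonian cycles
starting at `i`.
-/

open Finset Relation Function
open scoped symmDiff

namespace Matrix

variable {ι R : Type*} [Fintype ι] [DecidableEq ι] [CommSemiring R]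

theorem pow_succ_apply_eq_sum_walks (M : Matrix ι ι R) (k : ℕ) (i j : ι) :
    (M ^ (k + 1)) i j = ∑ w : Fin k → ι,
      (∏ m : Fin k, M (vecCons i w m.castSucc) (w m)) * M (vecCons i w (Fin.last k)) j := by
  induction k generalizing i with
  | zero => simp
  | succ k ih =>
    rw [pow_succ', mul_apply, ← (Fin.consEquiv fun _ => ι).sum_comp, Fintype.sum_prod_type]
    refine sum_congr rfl fun a _ => ?_
    simp [ih, mul_sum, Fin.prod_univ_succ, ← Fin.succ_last, mul_assoc]
    rfl

theorem trace_pow_succ_eq_sum_closedWalks (M : Matrix ι ι R) (k : ℕ) :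
    trace (M ^ (k + 1)) = ∑ p : Fin (k + 1) → ι, ∏ m, M (p m) (p (m + 1)) := by
  rw [← (Fin.consEquiv fun _ => ι).sum_comp, Fintype.sum_prod_type]
  refine sum_congr rfl fun i _ => ?_
  simp [pow_succ_apply_eq_sum_walks, Fin.prod_univ_castSucc, Fin.coeSucc_eq_succ]
  rfl

end Matrix

def IsClosedWalk {V : Type*} (E : V → V → Prop) {k : ℕ} (p : Fin (k + 1) → V) : Prop :=
  ∀ m, E (p m) (p (m + 1))

section ClosedWalk

variable {V : Type*} {E : V → V → Prop} {k : ℕ} {p : Fin (k + 1) → V}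

theorem isClosedWalk_iff :
    IsClosedWalk E p ↔ (∀ m : Fin k, E (p m.castSucc) (p m.succ)) ∧ E (p (Fin.last k)) (p 0) := by
  simp only [IsClosedWalk, Fin.forall_fin_succ', Fin.coeSucc_eq_succ, Fin.last_add_one]

theorem IsClosedWalk.comp_add_right (h : IsClosedWalk E p) (r : Fin (k + 1)) :
    IsClosedWalk E fun t => p (t + r) := fun t => by
  simpa only [add_right_comm] using h (t + r)

variable (E) in
noncomputable def closedWalkRotationEquiv (v : V) :
    {p : Fin (k + 1) → V // Bijective p ∧ IsClosedWalk E p} ≃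
      Fin (k + 1) × {p : Fin (k + 1) → V // Bijective p ∧ p 0 = v ∧ IsClosedWalk E p} where
  toFun p :=
    let r := (Equiv.ofBijective p.1 p.2.1).symm v
    (r, ⟨fun t => p.1 (t + r), p.2.1.comp (Equiv.addRight r).bijective,
      by simp [r, Equiv.ofBijective_apply_symm_apply], p.2.2.comp_add_right r⟩)
  invFun q := ⟨fun t => q.2.1 (t - q.1), q.2.2.1.comp (Equiv.subRight q.1).bijective,
    by simpa only [sub_eq_add_neg] using q.2.2.2.2.comp_add_right (-q.1)⟩
  left_inv p := by ext t; simp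
  right_inv := by
    rintro ⟨r, q, hq, hq0, -⟩
    have hr : (Equiv.ofBijective (fun t => q (t - r)) (hq.comp (Equiv.subRight r).bijective)).symm v
        = r := by
      rw [Equiv.symm_apply_eq]; simp [hq0]
    ext t <;> simp [hr]

theorem nat_card_bijective_isClosedWalk (v : V) :
    Nat.card {p : Fin (k + 1) → V // Bijective p ∧ IsClosedWalk E p} =
      (k + 1) * Nat.card {p : Fin (k + 1) → V // Bijective p ∧ p 0 = v ∧ IsClosedWalk E p} := by
  rw [Nat.card_congr (closedWalkRotationEquiv E v), Nat.card_prod, Nat.card_eq_fintype_card,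
    Fintype.card_fin]

end ClosedWalk

namespace Finset

variable {α : Type*} [DecidableEq α]

theorem image_univ_eq_univ_iff_bijective [Fintype α] {f : α → α} :
    image f univ = univ ↔ Bijective f := by
  simp only [eq_univ_iff_forall, mem_image, mem_univ, true_and]
  exact ⟨Surjective.bijective_of_finite, Bijective.surjective⟩

theorem mem_symmDiff_singleton_of_ne {D : Finset α} {v x : α} (hx : x ≠ v) :
    x ∈ D ∆ {v} ↔ x ∈ D := by
  simp [mem_symmDiff, hx]

theorem neg_one_pow_sub_card_symmDiff_singleton [Fintype α] {R : Type*} [Ring R]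
    (D : Finset α) (v : α) :
    (-1 : R) ^ (Fintype.card α - #(D ∆ {v})) = -(-1) ^ (Fintype.card α - #D) := by
  have hD := card_le_univ D
  by_cases h : v ∈ D
  · have hpos := card_pos.2 ⟨v, h⟩
    have hdel : D ∆ {v} = D.erase v := by ext x; by_cases x = v <;> simp_all [mem_symmDiff]
    rw [hdel, card_erase_of_mem h,
      show Fintype.card α - (#D - 1) = Fintype.card α - #D + 1 by omega, pow_succ, mul_neg_one]
  · have hins : D ∆ {v} = insert v D := by ext x; by_cases x = v <;> simp_all [mem_symmDiff]
    have hle := card_le_univ (insert v D)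
    rw [card_insert_of_notMem h] at hle
    rw [hins, card_insert_of_notMem h,
      show Fintype.card α - #D = Fintype.card α - (#D + 1) + 1 by omega, pow_succ, mul_neg_one,
      neg_neg]

theorem sum_powerset_neg_one_pow_card' {R : Type*} [Ring R] (s : Finset α) :
    ∑ t ∈ s.powerset, (-1 : R) ^ #t = if s = ∅ then 1 else 0 := by
  have := congrArg (Int.cast : ℤ → R) (sum_powerset_neg_one_pow_card (x := s))
  push_cast at this
  rw [this]

end Finset

section Component

variable {N : ℕ} (E : Fin N → Fin N → Prop)

def wAdj (C : Finset (Fin N)) (a b : Fin N) : Prop :=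
  a ∈ C ∧ b ∈ C ∧ (E a b ∨ E b a)

instance (C : Finset (Fin N)) : Std.Symm (wAdj E C) :=
  ⟨fun _ _ h => ⟨h.2.1, h.1, h.2.2.symm⟩⟩

noncomputable def wComponent (c : Fin N) (D : Finset (Fin N)) : Finset (Fin N) :=
  D.filter (ReflTransGen (wAdj E D) c)

variable {E} {c : Fin N} {C D : Finset (Fin N)}

theorem wConn_of_forall_reflTransGen (h : ∀ x ∈ C, ReflTransGen (wAdj E C) c x) : WConn E C :=
  fun a ha b hb => (Std.Symm.symm _ _ (h a ha)).trans (h b hb)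

theorem wComponent_subset : wComponent E c D ⊆ D := filter_subset _ _

theorem mem_wComponent_of_adj {x y : Fin N} (hx : x ∈ wComponent E c D) (hy : y ∈ D)
    (hxy : E x y ∨ E y x) : y ∈ wComponent E c D := by
  obtain ⟨hxD, hcx⟩ := mem_filter.1 hx
  exact mem_filter.2 ⟨hy, hcx.tail ⟨hxD, hy, hxy⟩⟩

theorem wConn_wComponent : WConn E (wComponent E c D) := by
  refine wConn_of_forall_reflTransGen (c := c) fun x hx => ?_
  obtain ⟨-, hcx⟩ := mem_filter.1 hx
  clear hx
  induction hcx with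
  | refl => exact .refl
  | tail hcy hyz ih =>
    exact ih.tail ⟨mem_filter.2 ⟨hyz.1, hcy⟩, mem_filter.2 ⟨hyz.2.1, hcy.tail hyz⟩, hyz.2.2⟩

theorem subset_wComponent (hC : WConn E C) (hc : c ∈ C) (hCD : C ⊆ D) :
    C ⊆ wComponent E c D := fun x hx =>
  mem_filter.2 ⟨hCD hx,
    ReflTransGen.mono (fun _ _ h => ⟨hCD h.1, hCD h.2.1, h.2.2⟩) _ _ (hC c hc x hx)⟩

theorem wComponent_subset_of_closed (hc : c ∈ C)
    (hC : ∀ x ∈ C, ∀ y ∈ D, E x y ∨ E y x → y ∈ C) : wComponent E c D ⊆ C := by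
  intro x hx
  obtain ⟨-, hcx⟩ := mem_filter.1 hx
  clear hx
  induction hcx with
  | refl => exact hc
  | tail _ hyz ih => exact hC _ ih _ hyz.2.1 hyz.2.2

theorem not_adj_of_notMem_union_wNbhd {S : Finset (Fin N)} {v x : Fin N}
    (hv : v ∉ S ∪ wNbhd E S) (hx : x ∈ S) : ¬(E x v ∨ E v x) := fun hxv =>
  hv <| mem_union.2 <| (em (v ∈ S)).imp id fun h => mem_filter.2 ⟨mem_univ v, h, x, hx, hxv.symm⟩

theorem wConn_and_dominating_iff (hc : c ∈ D) :
    (WConn E D ∧ D ∪ wNbhd E D = univ) ↔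
      wComponent E c D ∪ wNbhd E (wComponent E c D) = univ := by
  constructor
  · rintro ⟨hD, hdom⟩
    rwa [wComponent_subset.antisymm (subset_wComponent hD hc subset_rfl)]
  · intro hdom
    have hK : wComponent E c D = D := by
      refine wComponent_subset.antisymm fun u hu => ?_
      rcases mem_union.1 (hdom ▸ mem_univ u) with h | h
      · exact h
      · obtain ⟨-, hnot, j, hj, hju⟩ := mem_filter.1 h
        exact absurd (mem_wComponent_of_adj hj hu hju.symm) hnot
    exact hK ▸ ⟨wConn_wComponent, hdom⟩

theorem wComponent_symmDiff_singleton (hc : c ∈ D) {v : Fin N}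
    (hv : v ∉ wComponent E c D ∪ wNbhd E (wComponent E c D)) :
    wComponent E c (D ∆ {v}) = wComponent E c D := by
  have hvK : v ∉ wComponent E c D := fun h => hv (mem_union_left _ h)
  have hcK : c ∈ wComponent E c D := mem_filter.2 ⟨hc, .refl⟩
  refine (wComponent_subset_of_closed hcK fun x hx y hy hxy => ?_).antisymm
    (subset_wComponent wConn_wComponent hcK fun x hx => ?_)
  · have hyv : y ≠ v := by rintro rfl; exact not_adj_of_notMem_union_wNbhd hv hx hxy
    exact mem_wComponent_of_adj hx ((mem_symmDiff_singleton_of_ne hyv).1 hy) hxy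
  · exact (mem_symmDiff_singleton_of_ne (ne_of_mem_of_not_mem hx hvK)).2 (wComponent_subset hx)

end Component

section Cancellation

variable {N : ℕ} (E : Fin N → Fin N → Prop)

def IsConnDominating (D : Finset (Fin N)) : Prop :=
  WConn E D ∧ D ∪ wNbhd E D = univ

noncomputable def exitVertex (c : Fin N) (D : Finset (Fin N)) : Fin N :=
  if h : (wComponent E c D ∪ wNbhd E (wComponent E c D))ᶜ.Nonempty then
    (wComponent E c D ∪ wNbhd E (wComponent E c D))ᶜ.min' h
  else c

variable {E} {c : Fin N} {C D : Finset (Fin N)} {R : Type*} [Ring R]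

theorem exitVertex_notMem (hc : c ∈ D) (hD : ¬IsConnDominating E D) :
    exitVertex E c D ∉ wComponent E c D ∪ wNbhd E (wComponent E c D) := by
  have hne : (wComponent E c D ∪ wNbhd E (wComponent E c D))ᶜ.Nonempty := by
    rw [nonempty_iff_ne_empty, Ne, compl_eq_empty_iff]
    exact fun h => hD ((wConn_and_dominating_iff hc).2 h)
  rw [exitVertex, dif_pos hne]
  exact mem_compl.1 (min'_mem _ hne)

theorem exitVertex_congr {D' : Finset (Fin N)} (h : wComponent E c D = wComponent E c D') :
    exitVertex E c D = exitVertex E c D' := by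
  simp only [exitVertex, h]

theorem symmDiff_exitVertex (hC : WConn E C) (hc : c ∈ C) (hCD : C ⊆ D)
    (hD : ¬IsConnDominating E D) :
    C ⊆ D ∆ {exitVertex E c D} ∧ ¬IsConnDominating E (D ∆ {exitVertex E c D}) ∧
      exitVertex E c (D ∆ {exitVertex E c D}) = exitVertex E c D := by
  have hv := exitVertex_notMem (hCD hc) hD
  have hK := wComponent_symmDiff_singleton (hCD hc) hv
  have hCt : C ⊆ D ∆ {exitVertex E c D} := fun x hx =>
    (mem_symmDiff_singleton_of_ne (ne_of_mem_of_not_mem (subset_wComponent hC hc hCD hx)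
      fun h => hv (mem_union_left _ h))).2 (hCD hx)
  refine ⟨hCt, fun hD' => hD ?_, exitVertex_congr hK⟩
  rw [IsConnDominating, wConn_and_dominating_iff (hCD hc), ← hK]
  exact (wConn_and_dominating_iff (hCt hc)).1 hD'

theorem sum_superset_not_isConnDominating (hC : WConn E C) (hc : c ∈ C) :
    ∑ D with C ⊆ D ∧ ¬IsConnDominating E D, (-1 : R) ^ (N - #D) = 0 := by
  refine sum_involution (fun D _ => D ∆ {exitVertex E c D}) (fun D _ => ?_)
    (fun D _ _ => by simp [symmDiff_eq_left]) (fun D hD => ?_) (fun D hD => ?_)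
  · have hsign := neg_one_pow_sub_card_symmDiff_singleton (R := R) D (exitVertex E c D)
    rw [Fintype.card_fin] at hsign
    rw [hsign, add_neg_cancel]
  · obtain ⟨hCD, hD⟩ := (mem_filter.1 hD).2
    obtain ⟨hCt, hDt, -⟩ := symmDiff_exitVertex hC hc hCD hD
    exact mem_filter.2 ⟨mem_univ _, hCt, hDt⟩
  · obtain ⟨hCD, hD⟩ := (mem_filter.1 hD).2
    rw [(symmDiff_exitVertex hC hc hCD hD).2.2, symmDiff_symmDiff_cancel_right]

theorem sum_superset_neg_one_pow (C : Finset (Fin N)) :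
    ∑ D with C ⊆ D, (-1 : R) ^ (N - #D) = if C = univ then 1 else 0 := by
  have hcard (D : Finset (Fin N)) : N - #D = #Dᶜ := by simp [card_compl]
  simp_rw [hcard, ← compl_eq_empty_iff C, ← sum_powerset_neg_one_pow_card']
  exact sum_nbij' (·ᶜ) (·ᶜ) (by simp) (by simp [subset_compl_comm]) (by simp) (by simp) (by simp)

theorem sum_isConnDominating_ite_subset (hC : WConn E C) (hc : c ∈ C) :
    ∑ D with IsConnDominating E D, (if C ⊆ D then (-1 : R) ^ (N - #D) else 0) =
      if C = univ then 1 else 0 := by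
  have h := sum_filter_add_sum_filter_not {D | C ⊆ D} (IsConnDominating E)
    fun D => (-1 : R) ^ (N - #D)
  rw [filter_filter, filter_filter, sum_superset_not_isConnDominating hC hc, add_zero,
    sum_superset_neg_one_pow] at h
  rw [← sum_filter, filter_filter, ← h]
  simp_rw [and_comm]

end Cancellation

section Trace

variable {N : ℕ} {E : Fin N → Fin N → Prop}

theorem wConn_image_of_chain {k : ℕ} {p : Fin (k + 1) → Fin N}
    (hp : ∀ m : Fin k, E (p m.castSucc) (p m.succ)) : WConn E (image p univ) := by
  refine wConn_of_forall_reflTransGen (c := p 0) fun x hx => ?_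
  obtain ⟨m, -, rfl⟩ := mem_image.1 hx
  clear hx
  induction m using Fin.induction with
  | zero => exact .refl
  | succ m ih =>
    exact ih.tail ⟨mem_image_of_mem _ (mem_univ _), mem_image_of_mem _ (mem_univ _), .inl (hp m)⟩

variable {R : Type} [CommRing R] {A : Matrix (Fin N) (Fin N) R}

theorem trace_restrict_pow_succ (hA : ∀ i j, A i j = if E i j then 1 else 0)
    (D : Finset (Fin N)) (k : ℕ) :
    (restrict A D ^ (k + 1)).trace =
      ∑ p : Fin (k + 1) → Fin N, if IsClosedWalk E p ∧ image p univ ⊆ D then 1 else 0 := by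
  rw [Matrix.trace_pow_succ_eq_sum_closedWalks]
  refine sum_congr rfl fun p _ => ?_
  simp only [_root_.restrict, hA, ← ite_and]
  rw [prod_boole]
  congr 1
  simp only [mem_univ, true_imp_iff, IsClosedWalk, image_subset_iff, forall_and]
  exact propext ⟨fun h => ⟨h.2, h.1.1⟩, fun h => ⟨⟨h.2, fun _ => h.2 _⟩, h.1⟩⟩

theorem sum_isConnDominating_trace_restrict_pow (hA : ∀ i j, A i j = if E i j then 1 else 0)
    (k : ℕ) :
    ∑ D with IsConnDominating E D, (-1 : R) ^ (N - #D) * (restrict A D ^ (k + 1)).trace =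
      #{p : Fin (k + 1) → Fin N | IsClosedWalk E p ∧ image p univ = univ} := by
  simp_rw [trace_restrict_pow_succ hA, mul_sum]
  rw [sum_comm, natCast_card_filter]
  refine sum_congr rfl fun p _ => ?_
  by_cases hp : IsClosedWalk E p
  · simpa [hp] using sum_isConnDominating_ite_subset (R := R)
      (wConn_image_of_chain (isClosedWalk_iff.1 hp).1) (mem_image_of_mem p (mem_univ 0))
  · simp [hp]

end Trace

theorem stmt12 (n : ℕ) (E : Fin (n + 1) → Fin (n + 1) → Prop)
    (A : Matrix (Fin (n + 1)) (Fin (n + 1)) ℚ)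
    (hA : ∀ i j, A i j = if E i j then 1 else 0)
    (i : Fin (n + 1)) :
    (Nat.card {w : Fin (n + 1) → Fin (n + 1) //
        Function.Bijective w ∧ w 0 = i ∧
        (∀ m : Fin n, E (w m.castSucc) (w m.succ)) ∧ E (w (Fin.last n)) (w 0)} : ℚ)
      = (1 / (n + 1)) * ∑ D ∈ Finset.univ.powerset.filter
            (fun D : Finset (Fin (n + 1)) =>
              WConn E D ∧ D ∪ wNbhd E D = Finset.univ),
          (-1 : ℚ) ^ (n + 1 - D.card) * Matrix.trace (restrict A D ^ (n + 1)) := by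
  have hcount : (#{p : Fin (n + 1) → Fin (n + 1) | IsClosedWalk E p ∧ image p univ = univ} : ℚ) =
      (n + 1) * Nat.card {w : Fin (n + 1) → Fin (n + 1) //
        Function.Bijective w ∧ w 0 = i ∧
        (∀ m : Fin n, E (w m.castSucc) (w m.succ)) ∧ E (w (Fin.last n)) (w 0)} := by
    simp only [← isClosedWalk_iff]
    rw [← Nat.cast_add_one, ← Nat.cast_mul, ← nat_card_bijective_isClosedWalk,
      Nat.card_eq_fintype_card, Fintype.card_subtype]
    simp only [image_univ_eq_univ_iff_bijective, and_comm]
  rw [← sum_isConnDominating_trace_restrict_pow hA n] at hcount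
  rw [powerset_univ, one_div, eq_inv_mul_iff_mul_eq₀ (by positivity)]
  convert hcount.symm using 3
  exact .rfl
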